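/- (Averaging of the demodulated measurement recovers the gradient.) Let Q : ℝⁿ → ℝ be continuously differentiable with ℓ-Lipschitz gradient (ℓ > 0). Then for every θ̂ ∈ ℝⁿ, every a > 0 and every index i ∈ {1, …, n}: |(1/T)·∫₀ᵀ Q(θ̂ + S(t))·(2/a)·sin(ω_i t) dt − ∂Q/∂θ_i(θ̂)| ≤ n·ℓ·a. In particular, the T-average of the demodulated measurement equals ∇Q(θ̂) up to an error of order O(a). -/

import Mathlib

open scoped RealInnerProductSpace
open Set Filter

/-- The dither (perturbation) signal `S(t) = a·(sin(ω₁t), …, sin(ωₙt))`. -/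
noncomputable def dither {n : ℕ} (ω : Fin n → ℝ) (a t : ℝ) : EuclideanSpace ℝ (Fin n) :=
  WithLp.toLp 2 (fun i => a * Real.sin (ω i * t))

/-- The demodulation signal `M(t) = (2/a)·(sin(ω₁t), …, sin(ωₙt))`. -/
noncomputable def demod {n : ℕ} (ω : Fin n → ℝ) (a t : ℝ) : EuclideanSpace ℝ (Fin n) :=
  WithLp.toLp 2 (fun i => (2 / a) * Real.sin (ω i * t))

/-!
Split `Q (θ̂ + S t) = Q θ̂ + ⟪∇Q θ̂, S t⟫ + R t`, where the Lipschitz gradient gives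
`|R t| ≤ ℓ/2 · ‖S t‖² ≤ ℓ/2 · n a²`. Over a common period the sines `sin (ω_j t)` have mean zero
and, the frequencies being distinct and positive, are orthogonal with `∫₀ᵀ sin² (ω_i t) = T/2`;
so demodulating the affine part by `(2/a) sin (ω_i t)` and averaging returns exactly `∂_i Q θ̂`,
while the remainder contributes at most `ℓ/2 · n a² · 2/a = n ℓ a`.
-/

open Real

theorem integral_cos_const_mul_eq_zero {c T : ℝ} {k : ℤ} (hc : c ≠ 0)
    (hk : c * T = k * (2 * π)) : ∫ t in (0 : ℝ)..T, cos (c * t) = 0 := by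
  rw [intervalIntegral.integral_comp_mul_left cos hc, integral_cos, mul_zero, hk,
    sin_periodic.int_mul_eq, sub_self, smul_zero]

theorem integral_sin_const_mul_eq_zero {c T : ℝ} {k : ℤ} (hc : c ≠ 0)
    (hk : c * T = k * (2 * π)) : ∫ t in (0 : ℝ)..T, sin (c * t) = 0 := by
  rw [intervalIntegral.integral_comp_mul_left sin hc, integral_sin, mul_zero, hk,
    cos_int_mul_two_pi, cos_zero, sub_self, smul_zero]

theorem integral_sin_mul_sin_eq {p q T : ℝ} {k m : ℤ} (hp : p * T = k * (2 * π))
    (hq : q * T = m * (2 * π)) (hpq : p + q ≠ 0) :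
    ∫ t in (0 : ℝ)..T, sin (p * t) * sin (q * t) = if p = q then T / 2 else 0 := by
  have product_to_sum : ∀ t, sin (p * t) * sin (q * t)
      = (cos ((p - q) * t) - cos ((p + q) * t)) / 2 := by
    intro t
    rw [sub_mul, add_mul, cos_sub, cos_add]
    ring
  have h_sum : ∫ t in (0 : ℝ)..T, cos ((p + q) * t) = 0 :=
    integral_cos_const_mul_eq_zero (k := k + m) hpq (by push_cast; linear_combination hp + hq)
  simp_rw [product_to_sum, intervalIntegral.integral_div]
  rw [intervalIntegral.integral_sub (Continuous.intervalIntegrable (by fun_prop) _ _)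
    (Continuous.intervalIntegrable (by fun_prop) _ _), h_sum, sub_zero]
  split_ifs with h
  · simp [h]
  · rw [integral_cos_const_mul_eq_zero (k := k - m) (sub_ne_zero.2 h)
      (by push_cast; linear_combination hp - hq), zero_div]

section Dither

variable {n : ℕ} (ω : Fin n → ℝ) (a : ℝ)

theorem continuous_dither : Continuous (dither ω a) :=
  (PiLp.continuous_toLp 2 _).comp (by fun_prop)

theorem inner_dither (g : EuclideanSpace ℝ (Fin n)) (t : ℝ) :
    ⟪g, dither ω a t⟫ = ∑ j, g j * (a * sin (ω j * t)) := by
  simp [dither, PiLp.inner_apply, mul_comm]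

theorem norm_dither_sq_le (t : ℝ) : ‖dither ω a t‖ ^ 2 ≤ n * a ^ 2 := by
  rw [EuclideanSpace.norm_sq_eq]
  calc ∑ j, ‖dither ω a t j‖ ^ 2 ≤ ∑ _j : Fin n, a ^ 2 := by
        refine Finset.sum_le_sum fun j _ => ?_
        simp only [dither, PiLp.toLp_apply, Real.norm_eq_abs, sq_abs, mul_pow]
        nlinarith [sin_sq_le_one (ω j * t), sq_nonneg a]
    _ = n * a ^ 2 := by simp

end Dither

theorem integral_affine_dither_mul_sin {n : ℕ} {ω : Fin n → ℝ} {a T : ℝ} (ha : a ≠ 0)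
    (hω : ∀ j, 0 < ω j) (hωinj : Function.Injective ω)
    (hper : ∀ j, ∃ k : ℤ, ω j * T = k * (2 * π))
    (c : ℝ) (g : EuclideanSpace ℝ (Fin n)) (i : Fin n) :
    ∫ t in (0 : ℝ)..T, (c + ⟪g, dither ω a t⟫) * ((2 / a) * sin (ω i * t)) = T * g i := by
  choose k hk using hper
  have expand : ∀ t, (c + ⟪g, dither ω a t⟫) * ((2 / a) * sin (ω i * t))
      = c * (2 / a) * sin (ω i * t) + ∑ j, 2 * g j * (sin (ω j * t) * sin (ω i * t)) := by
    intro t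
    rw [inner_dither, add_mul, Finset.sum_mul]
    congr 1
    · ring
    · refine Finset.sum_congr rfl fun j _ => ?_
      field_simp
  simp_rw [expand]
  rw [intervalIntegral.integral_add (Continuous.intervalIntegrable (by fun_prop) _ _)
      (Continuous.intervalIntegrable (by fun_prop) _ _),
    intervalIntegral.integral_const_mul,
    integral_sin_const_mul_eq_zero (hω i).ne' (hk i),
    intervalIntegral.integral_finsetSum
      fun j _ => Continuous.intervalIntegrable (by fun_prop) _ _]
  simp_rw [intervalIntegral.integral_const_mul,
    integral_sin_mul_sin_eq (hk _) (hk i) (add_pos (hω _) (hω i)).ne', hωinj.eq_iff]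
  simp only [mul_zero, mul_ite, Finset.sum_ite_eq', Finset.mem_univ, if_true, zero_add]
  ring

theorem norm_sub_sub_fderiv_le_of_lipschitz_fderiv {E F : Type*} [NormedAddCommGroup E]
    [NormedSpace ℝ E] [NormedAddCommGroup F] [NormedSpace ℝ F] {f : E → F} {ℓ : ℝ} {x : E}
    (hf : Differentiable ℝ f) (hlip : ∀ y, ‖fderiv ℝ f y - fderiv ℝ f x‖ ≤ ℓ * ‖y - x‖)
    (h : E) : ‖f (x + h) - f x - fderiv ℝ f x h‖ ≤ ℓ / 2 * ‖h‖ ^ 2 := by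
  set φ : ℝ → F := fun s => f (x + s • h) - f x - s • fderiv ℝ f x h
  have hφ : ∀ s, HasDerivAt φ (fderiv ℝ f (x + s • h) h - fderiv ℝ f x h) s := by
    intro s
    have hline : HasDerivAt (fun s : ℝ => x + s • h) h s := by
      simpa using ((hasDerivAt_id s).smul_const h).const_add x
    have := ((hf _).hasFDerivAt.comp_hasDerivAt s hline).sub_const (f x)
    exact (this.sub ((hasDerivAt_id' s).smul_const (fderiv ℝ f x h))).congr_deriv (by rw [one_smul])
  have hB : ∀ s, HasDerivAt (fun s : ℝ => ℓ / 2 * ‖h‖ ^ 2 * s ^ 2) (ℓ * ‖h‖ ^ 2 * s) s := by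
    intro s
    exact ((hasDerivAt_pow 2 s).const_mul _).congr_deriv (by push_cast; ring)
  have bound : ∀ s ∈ Ico (0 : ℝ) 1,
      ‖fderiv ℝ f (x + s • h) h - fderiv ℝ f x h‖ ≤ ℓ * ‖h‖ ^ 2 * s := by
    rintro s ⟨hs, -⟩
    calc ‖fderiv ℝ f (x + s • h) h - fderiv ℝ f x h‖
        ≤ ‖fderiv ℝ f (x + s • h) - fderiv ℝ f x‖ * ‖h‖ := by
          rw [← sub_apply]; exact ContinuousLinearMap.le_opNorm _ _
      _ ≤ ℓ * ‖s • h‖ * ‖h‖ := by gcongr; simpa using hlip (x + s • h)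
      _ = ℓ * ‖h‖ ^ 2 * s := by rw [norm_smul, Real.norm_of_nonneg hs]; ring
  have := image_norm_le_of_norm_deriv_right_le_deriv_boundary
    (fun s _ => (hφ s).continuousAt.continuousWithinAt) (fun s _ => (hφ s).hasDerivWithinAt)
    (by simp [φ]) hB bound (right_mem_Icc.2 zero_le_one)
  simpa [φ] using this

theorem abs_sub_sub_inner_gradient_le_of_lipschitz_gradient {E : Type*} [NormedAddCommGroup E]
    [InnerProductSpace ℝ E] [CompleteSpace E] {f : E → ℝ} {ℓ : ℝ} {x : E}
    (hf : Differentiable ℝ f) (hlip : ∀ y, ‖gradient f y - gradient f x‖ ≤ ℓ * ‖y - x‖)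
    (h : E) : |f (x + h) - f x - ⟪gradient f x, h⟫| ≤ ℓ / 2 * ‖h‖ ^ 2 := by
  rw [inner_gradient_left, ← Real.norm_eq_abs]
  refine norm_sub_sub_fderiv_le_of_lipschitz_fderiv hf (fun y => ?_) h
  rw [← toDual_gradient, ← toDual_gradient, ← map_sub, LinearIsometryEquiv.norm_map]
  exact hlip y

theorem abs_average_mul_demod_le {R : ℝ → ℝ} {M a T ω : ℝ} (ha : 0 < a) (hT : 0 < T)
    (hR : ∀ t, |R t| ≤ M) :
    |(1 / T) * ∫ t in (0 : ℝ)..T, R t * ((2 / a) * sin (ω * t))| ≤ M * (2 / a) := by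
  have hRw : ∀ t ∈ uIoc 0 T, ‖R t * ((2 / a) * sin (ω * t))‖ ≤ M * (2 / a) := by
    intro t _
    rw [norm_mul, norm_mul, Real.norm_of_nonneg (by positivity : 0 ≤ 2 / a)]
    gcongr
    · exact (abs_nonneg _).trans (hR 0)
    · exact hR t
    · exact mul_le_of_le_one_right (by positivity) (abs_sin_le_one _)
  have hint := intervalIntegral.norm_integral_le_of_norm_le_const hRw
  rw [Real.norm_eq_abs, sub_zero, abs_of_pos hT] at hint
  rw [abs_mul, abs_of_pos (one_div_pos.2 hT), one_div_mul_eq_div, div_le_iff₀ hT]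
  linarith

theorem stmt13_general {n : ℕ} (ω : Fin n → ℝ) (T : ℝ)
    (hω : ∀ i, 0 < ω i) (hωinj : Function.Injective ω)
    (hT : 0 < T) (hTper : ∀ i, ∃ m : ℕ, 0 < m ∧ ω i * T = (m : ℝ) * (2 * Real.pi))
    (Q : EuclideanSpace ℝ (Fin n) → ℝ) (ℓ : ℝ) (hℓ : 0 < ℓ)
    (hQ : ContDiff ℝ 1 Q)
    (hQlip : ∀ x y, ‖gradient Q x - gradient Q y‖ ≤ ℓ * ‖x - y‖) :
    ∀ (θhat : EuclideanSpace ℝ (Fin n)) (a : ℝ), 0 < a → ∀ i : Fin n,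
      |(1 / T) * (∫ t in (0:ℝ)..T,
          Q (θhat + dither ω a t) * ((2 / a) * Real.sin (ω i * t))) -
        gradient Q θhat i| ≤ n * ℓ * a := by
  intro θhat a ha i
  have hper : ∀ j, ∃ k : ℤ, ω j * T = k * (2 * π) := fun j =>
    let ⟨m, _, hm⟩ := hTper j; ⟨m, mod_cast hm⟩
  have hQd : Differentiable ℝ Q := hQ.differentiable one_ne_zero
  set R : ℝ → ℝ := fun t =>
    Q (θhat + dither ω a t) - (Q θhat + ⟪gradient Q θhat, dither ω a t⟫)
  have hR : ∀ t, |R t| ≤ ℓ / 2 * (n * a ^ 2) := fun t =>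
    calc |R t| = |Q (θhat + dither ω a t) - Q θhat - ⟪gradient Q θhat, dither ω a t⟫| := by
          rw [sub_sub]
      _ ≤ ℓ / 2 * ‖dither ω a t‖ ^ 2 :=
          abs_sub_sub_inner_gradient_le_of_lipschitz_gradient hQd (hQlip · θhat) _
      _ ≤ ℓ / 2 * (n * a ^ 2) := by gcongr; exact norm_dither_sq_le ω a t
  have error_eq : (1 / T) * (∫ t in (0:ℝ)..T, Q (θhat + dither ω a t) * ((2 / a) * sin (ω i * t)))
      - gradient Q θhat i = (1 / T) * ∫ t in (0:ℝ)..T, R t * ((2 / a) * sin (ω i * t)) := by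
    have hS := continuous_dither ω a
    simp_rw [R, sub_mul]
    rw [intervalIntegral.integral_sub (Continuous.intervalIntegrable (by fun_prop) _ _)
      (Continuous.intervalIntegrable (by fun_prop) _ _),
      integral_affine_dither_mul_sin ha.ne' hω hωinj hper, mul_sub, ← mul_assoc,
      one_div_mul_cancel hT.ne', one_mul]
  rw [error_eq]
  calc _ ≤ ℓ / 2 * (n * a ^ 2) * (2 / a) := abs_average_mul_demod_le ha hT hR
    _ = n * ℓ * a := by field_simp

/-- averaging of the demodulated measurement recovers the gradient:
for Q of class C¹ with ℓ-Lipschitz gradient,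
`|(1/T)·∫₀ᵀ Q(θ̂+S(t))·(2/a)·sin(ωᵢt) dt − ∂Q/∂θᵢ(θ̂)| ≤ n·ℓ·a`. -/
theorem stmt13 {n : ℕ} (hn : 1 ≤ n) (ω : Fin n → ℝ) (T : ℝ)
    (hω : ∀ i, 0 < ω i) (hωinj : Function.Injective ω)
    (hωrat : ∀ i j, ∃ q : ℚ, ω i = (q : ℝ) * ω j)
    (hT : 0 < T) (hTper : ∀ i, ∃ m : ℕ, 0 < m ∧ ω i * T = (m : ℝ) * (2 * Real.pi))
    (Q : EuclideanSpace ℝ (Fin n) → ℝ) (ℓ : ℝ) (hℓ : 0 < ℓ)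
    (hQ : ContDiff ℝ 1 Q)
    (hQlip : ∀ x y, ‖gradient Q x - gradient Q y‖ ≤ ℓ * ‖x - y‖) :
    ∀ (θhat : EuclideanSpace ℝ (Fin n)) (a : ℝ), 0 < a → ∀ i : Fin n,
      |(1 / T) * (∫ t in (0:ℝ)..T,
          Q (θhat + dither ω a t) * ((2 / a) * Real.sin (ω i * t))) -
        gradient Q θhat i| ≤ n * ℓ * a :=
  stmt13_general ω T hω hωinj hT hTper Q ℓ hℓ hQ hQlip
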